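/- arXiv:0911.3603 — 3 statements merged into one kernel-verified Lean document; each statement's English description precedes it below -/
import Mathlib

section
/- In the group algebra kQ_{4t} over a field of characteristic 2, the norm element N = Σ_{j ∈ Q_{4t}} j satisfies N = a^{2t-1} b, where a = g+1 and b = h+1. -/
/-!
In characteristic 2 the Frobenius identity `(x + 1) ^ 2 ^ n = x ^ 2 ^ n + 1` gives, by induction,
`(x + 1) ^ (2 ^ n - 1) = 1 + x + ⋯ + x ^ (2 ^ n - 1)`. Since `g` has order `2t`, a power of two,
`a ^ (2t - 1)` is therefore the sum of the cyclic subgroup `⟨g⟩` of index 2, and multiplying by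
`b = h + 1` adds the sum of its other coset `⟨g⟩ h`.
-/

open MonoidAlgebra QuaternionGroup Finset

theorem add_one_pow_two_pow_sub_one {R : Type*} [Semiring R] [CharP R 2] (x : R) (n : ℕ) :
    (x + 1) ^ (2 ^ n - 1) = ∑ i ∈ range (2 ^ n), x ^ i := by
  induction n with
  | zero => simp
  | succ n ih =>
    have frobenius : (x + 1) ^ 2 ^ n = x ^ 2 ^ n + 1 := by
      simpa using add_pow_char_pow_of_commute 2 n (Commute.one_right x)
    have hexp : 2 ^ (n + 1) - 1 = 2 ^ n + (2 ^ n - 1) := by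
      have := Nat.one_le_two_pow (n := n)
      rw [pow_succ]
      omega
    rw [hexp, pow_add, frobenius, ih, pow_succ, mul_two, sum_range_add, add_mul, one_mul, mul_sum]
    simp_rw [← pow_add, add_comm]

theorem ZMod.sum_range_natCast {n : ℕ} [NeZero n] {M : Type*} [AddCommMonoid M]
    (f : ZMod n → M) : ∑ i ∈ range n, f i = ∑ j : ZMod n, f j := by
  obtain ⟨n, rfl⟩ := Nat.exists_eq_succ_of_ne_zero (NeZero.ne n)
  rw [← Fin.sum_univ_eq_sum_range (fun i => f i)]
  exact Fintype.sum_congr _ _ fun x => congrArg f (ZMod.natCast_zmod_val (n := n + 1) x)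

namespace QuaternionGroup

variable {n : ℕ}

def sumEquiv : ZMod (2 * n) ⊕ ZMod (2 * n) ≃ QuaternionGroup n where
  toFun := Sum.elim a xa
  invFun
    | a i => .inl i
    | xa i => .inr i
  left_inv := by rintro (i | i) <;> rfl
  right_inv := by rintro (i | i) <;> rfl

theorem sum_univ [NeZero n] {M : Type*} [AddCommMonoid M] (f : QuaternionGroup n → M) :
    ∑ j, f j = ∑ i, f (a i) + ∑ i, f (xa i) := by
  rw [← sumEquiv.sum_comp, Fintype.sum_sum_type]
  rfl

end QuaternionGroup

section GroupAlgebra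

variable (k : Type*) {n : ℕ}

theorem MonoidAlgebra.of_a_one_pow [Semiring k] (i : ℕ) :
    of k (QuaternionGroup n) (a 1) ^ i = of k _ (a i) := by
  rw [← map_pow, a_one_pow]

theorem MonoidAlgebra.sum_of_a_mul_of_xa [Semiring k] [NeZero n] (j : ZMod (2 * n)) :
    (∑ i, of k (QuaternionGroup n) (a i)) * of k _ (xa j) = ∑ i, of k _ (xa i) := by
  simp_rw [sum_mul, ← map_mul, a_mul_xa]
  exact Fintype.sum_equiv (Equiv.subLeft j) _ _ fun _ => rfl

theorem MonoidAlgebra.of_a_one_add_one_pow [CommSemiring k] [CharP k 2] [NeZero n] {m : ℕ}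
    (hn : n = 2 ^ m) :
    (of k (QuaternionGroup n) (a 1) + 1) ^ (2 * n - 1) = ∑ i, of k _ (a i) := by
  have : CharP (MonoidAlgebra k (QuaternionGroup n)) 2 :=
    charP_of_injective_algebraMap single_right_injective 2
  have h2n : 2 * n = 2 ^ (m + 1) := by rw [hn, pow_succ, mul_comm]
  rw [show 2 * n - 1 = 2 ^ (m + 1) - 1 by rw [h2n], add_one_pow_two_pow_sub_one, ← h2n]
  simp_rw [of_a_one_pow]
  exact ZMod.sum_range_natCast fun i => of k (QuaternionGroup n) (a i)

end GroupAlgebra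

theorem stmt_3_general (k : Type*) [Field k] [CharP k 2] (t : ℕ)
    (hpow : ∃ m : ℕ, t = 2 ^ m) [NeZero t]
    (g h : MonoidAlgebra k (QuaternionGroup t))
    (hg : g = of k (QuaternionGroup t) (QuaternionGroup.a 1))
    (hh : h = of k (QuaternionGroup t) (QuaternionGroup.xa 0))
    (a b N : MonoidAlgebra k (QuaternionGroup t))
    (ha : a = g + 1) (hb : b = h + 1)
    (hN : N = ∑ j : QuaternionGroup t, of k (QuaternionGroup t) j) :
    N = a ^ (2 * t - 1) * b := by
  obtain ⟨m, hm⟩ := hpow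
  subst hg hh ha hb hN
  rw [of_a_one_add_one_pow k hm, mul_add_one, sum_of_a_mul_of_xa, sum_univ, add_comm]

/-- the norm element `N = Σ_{j ∈ Q_{4t}} j` equals `a^{2t-1} b`. -/
theorem stmt_3 (k : Type*) [Field k] [CharP k 2] (t : ℕ) (ht : 2 ≤ t)
    (hpow : ∃ m : ℕ, t = 2 ^ m) [NeZero t]
    (g h : MonoidAlgebra k (QuaternionGroup t))
    (hg : g = of k (QuaternionGroup t) (QuaternionGroup.a 1))
    (hh : h = of k (QuaternionGroup t) (QuaternionGroup.xa 0))
    (a b N : MonoidAlgebra k (QuaternionGroup t))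
    (ha : a = g + 1) (hb : b = h + 1)
    (hN : N = ∑ j : QuaternionGroup t, of k (QuaternionGroup t) j) :
    N = a ^ (2 * t - 1) * b :=
  stmt_3_general k t hpow g h hg hh a b N ha hb hN
end

section
/- Let Λ = k[x, y, s, s^{-1}]/(x^2 + y^2 + xy, y^3) with char k = 2 (Tate cohomology of Q_8). In Λ, xy·(x+y) = x²y + xy² and summing the five Hochschild coboundary equations for the triples (y,x,y), (x,y,y), (y,y,x), (x,x,x), (x,y,x) with values 0, 0, 0, 0, xy yields xy = x·(g(x,y) + g(y,x)) for any 2-cochain g. -/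
open MvPolynomial

set_option maxHeartbeats 2000000

/-- `k[x,y][s,s⁻¹]`: Laurent polynomials in `s` over `k[x,y]`. -/
noncomputable abbrev LaurentXY (k : Type) [Field k] : Type :=
  LaurentPolynomial (MvPolynomial (Fin 2) k)

/-- The Tate cohomology ring of `Q_8`:
`Λ = k[x,y,s,s⁻¹]/(x² + y² + xy, y³)`. -/
noncomputable abbrev LamQ8 (k : Type) [Field k] : Type :=
  LaurentXY k ⧸ (Ideal.span
    {LaurentPolynomial.C (X 0 ^ 2 + X 1 ^ 2 + X 0 * X 1),
     LaurentPolynomial.C ((X 1 : MvPolynomial (Fin 2) k) ^ 3)} : Ideal (LaurentXY k))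

/-- The class of `x` in `Λ`. -/
noncomputable def qx (k : Type) [Field k] : LamQ8 k :=
  Ideal.Quotient.mk _ (LaurentPolynomial.C (X 0))
/-- The class of `y` in `Λ`. -/
noncomputable def qy (k : Type) [Field k] : LamQ8 k :=
  Ideal.Quotient.mk _ (LaurentPolynomial.C (X 1))
/-- The class of `s` in `Λ`. -/
noncomputable def qs (k : Type) [Field k] : LamQ8 k :=
  Ideal.Quotient.mk _ (LaurentPolynomial.T 1)
/-- The class of `s⁻¹` in `Λ`. -/
noncomputable def qsInv (k : Type) [Field k] : LamQ8 k :=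
  Ideal.Quotient.mk _ (LaurentPolynomial.T (-1))

/-!
Write `δg` for the Hochschild coboundary. Summing `δg` over the five triples, every term
except `x * g(x,y) + x * g(y,x)` occurs exactly twice once `x²` is rewritten as `y² + xy`,
so in characteristic `2` the sum collapses to `x (g(x,y) + g(y,x))`.
-/

section Hochschild

variable {R A : Type*} [CommSemiring R] [CommRing A] [Module R A]

/-- The Hochschild coboundary of a bilinear map, with the signs dropped (characteristic `2`). -/
def hochschildCoboundary (g : A →ₗ[R] A →ₗ[R] A) (a b c : A) : A :=
  a * g b c + g (a * b) c + g a (b * c) + g a b * c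

theorem hochschildCoboundary_five_sum (h2 : (2 : A) = 0) {x y : A}
    (hxy : x ^ 2 + y ^ 2 + x * y = 0) (g : A →ₗ[R] A →ₗ[R] A) :
    hochschildCoboundary g y x y + hochschildCoboundary g x y y + hochschildCoboundary g y y x
      + hochschildCoboundary g x x x + hochschildCoboundary g x y x
      = x * (g x y + g y x) := by
  have hx2 : x * x = y * y + x * y := by linear_combination hxy - (y * y + x * y) * h2
  have hleft : g (x * x) x = g (y * y) x + g (x * y) x := by
    rw [hx2, map_add, LinearMap.add_apply]
  have hright : g x (x * x) = g x (y * y) + g x (x * y) := by rw [hx2, map_add]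
  unfold hochschildCoboundary
  rw [hleft, hright, mul_comm y x]
  -- the coefficient of `2` lists the terms that occur twice in the sum
  linear_combination (y * g x y + y * g y x + x * g y y + x * g x x
      + g (x * y) y + g y (x * y) + g x (y * y) + g (y * y) x
      + g (x * y) x + g x (x * y)) * h2

end Hochschild

theorem two_eq_zero_of_charP_two (k A : Type*) [CommSemiring k] [CharP k 2] [Semiring A]
    [Algebra k A] : (2 : A) = 0 := by
  rw [← map_ofNat (algebraMap k A) 2, CharP.ofNat_eq_zero, map_zero]

theorem qx_sq_add_qy_sq_add_qx_mul_qy (k : Type) [Field k] :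
    qx k ^ 2 + qy k ^ 2 + qx k * qy k = 0 := by
  simp only [qx, qy, ← map_pow, ← map_mul, ← map_add]
  exact Ideal.Quotient.eq_zero_iff_mem.mpr (Ideal.subset_span (Set.mem_insert _ _))

/-- in `Λ`, `xy(x+y) = x²y + xy²`, and for any `2`-cochain `g`,
summing the five Hochschild coboundary equations for the triples
`(y,x,y), (x,y,y), (y,y,x), (x,x,x), (x,y,x)` with values `0,0,0,0,xy`
yields `xy = x(g(x,y) + g(y,x))`. -/
theorem stmt_11 (k : Type) [Field k] [CharP k 2] :
    (qx k * qy k * (qx k + qy k) = qx k ^ 2 * qy k + qx k * qy k ^ 2) ∧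
    ∀ g : LamQ8 k →ₗ[k] LamQ8 k →ₗ[k] LamQ8 k,
      (qy k * g (qx k) (qy k) + g (qy k * qx k) (qy k) + g (qy k) (qx k * qy k)
        + g (qy k) (qx k) * qy k = 0) →
      (qx k * g (qy k) (qy k) + g (qx k * qy k) (qy k) + g (qx k) (qy k ^ 2)
        + g (qx k) (qy k) * qy k = 0) →
      (qy k * g (qy k) (qx k) + g (qy k ^ 2) (qx k) + g (qy k) (qy k * qx k)
        + g (qy k) (qy k) * qx k = 0) →
      (qx k * g (qx k) (qx k) + g (qx k ^ 2) (qx k) + g (qx k) (qx k ^ 2)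
        + g (qx k) (qx k) * qx k = 0) →
      (qx k * g (qy k) (qx k) + g (qx k * qy k) (qx k) + g (qx k) (qy k * qx k)
        + g (qx k) (qy k) * qx k = qx k * qy k) →
      qx k * qy k = qx k * (g (qx k) (qy k) + g (qy k) (qx k)) := by
  refine ⟨by ring, fun g hyxy hxyy hyyx hxxx hxyx => ?_⟩
  have hsum := hochschildCoboundary_five_sum (R := k) (A := LamQ8 k)
    (two_eq_zero_of_charP_two k (LamQ8 k)) (qx_sq_add_qy_sq_add_qx_mul_qy k) g
  simp only [hochschildCoboundary, ← sq] at hsum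
  rwa [hyxy, hxyy, hyyx, hxxx, hxyx, zero_add, zero_add, zero_add, zero_add] at hsum
end

section
/- Let Λ = k[x, y, s, s^{-1}]/(x² + y² + xy, y³), char k = 2, A = [[y, x+y],[x, y]], B = [[x², 0],[x², x²]], and D = [[x, y],[x+y, x]] matrices over Λ. Then AD = DA = 0, and there do not exist 2×2 matrices Q, R over Λ with B = AQ + RA. -/
open MvPolynomial

/-!
If `A D = D A = 0`, cyclicity of the trace gives
`tr ((A Q + R A) D) = tr (Q (D A)) + tr (R (A D)) = 0` for all `Q, R`, whereas `tr (B D) = x²y`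
in characteristic `2`. That `x²y ≠ 0` in `Λ` is seen by sending `s ↦ 1`,
`y ↦ y ∈ k[y]/(y³)` and `x` to a root of `X² + yX + y²` adjoined to `k[y]/(y³)`: the root
and `1` form a basis there, and `x²y = -y²x` because `y³ = 0`.
-/

theorem Matrix.not_exists_eq_mul_add_mul_of_trace_mul_ne_zero {n α : Type*} [Fintype n]
    [CommSemiring α] {A B D : Matrix n n α} (hAD : A * D = 0) (hDA : D * A = 0)
    (hB : (B * D).trace ≠ 0) : ¬ ∃ Q R : Matrix n n α, B = A * Q + R * A := by
  rintro ⟨Q, R, rfl⟩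
  apply hB
  calc ((A * Q + R * A) * D).trace = (Q * (D * A)).trace + (R * (A * D)).trace := by
        rw [Matrix.add_mul, Matrix.trace_add, Matrix.mul_assoc, Matrix.trace_mul_comm A,
          Matrix.mul_assoc, Matrix.mul_assoc]
    _ = 0 := by simp [hAD, hDA]

namespace Q8
variable {R : Type*} [CommRing R] (x y : R)

def matA : Matrix (Fin 2) (Fin 2) R := !![y, x + y; x, y]

def matB : Matrix (Fin 2) (Fin 2) R := !![x ^ 2, 0; x ^ 2, x ^ 2]

def matD : Matrix (Fin 2) (Fin 2) R := !![x, y; x + y, x]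

variable {x y}

theorem matA_mul_matD (h2 : (2 : R) = 0) (h : x ^ 2 + y ^ 2 + x * y = 0) :
    matA x y * matD x y = 0 := by
  ext i j
  fin_cases i <;> fin_cases j <;> simp [matA, matD]
  · linear_combination h + x * y * h2
  · linear_combination h
  · linear_combination h
  · linear_combination x * y * h2

theorem matD_mul_matA (h2 : (2 : R) = 0) (h : x ^ 2 + y ^ 2 + x * y = 0) :
    matD x y * matA x y = 0 := by
  ext i j
  fin_cases i <;> fin_cases j <;> simp [matA, matD]
  · linear_combination x * y * h2
  · linear_combination h
  · linear_combination h
  · linear_combination h + x * y * h2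

theorem trace_matB_mul_matD (h2 : (2 : R) = 0) :
    (matB x * matD x y).trace = x ^ 2 * y := by
  rw [matB, matD, Matrix.mul_fin_two, Matrix.trace_fin_two_of]
  linear_combination x ^ 3 * h2

end Q8

-- In `namespace Polynomial`, `X` and `C` do not clash with the open `MvPolynomial`.
namespace Polynomial
open AdjoinRoot
variable {R : Type*} [CommRing R]

theorem _root_.AdjoinRoot.root_X_pow_pow_self (n : ℕ) : root (X ^ n : R[X]) ^ n = 0 := by
  rw [← mk_X, ← map_pow, mk_self]

theorem _root_.AdjoinRoot.root_X_pow_pow_ne_zero [Nontrivial R] {m n : ℕ} (h : m < n) :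
    root (X ^ n : R[X]) ^ m ≠ 0 := by
  rw [← mk_X, ← map_pow]
  exact mk_ne_zero_of_natDegree_lt (monic_X_pow n) (monic_X_pow m).ne_zero (by simpa)

theorem _root_.AdjoinRoot.root_sq_add_of_sq_add_root_mul_of (y : R) :
    root (X ^ 2 + C y * X + C (y ^ 2)) ^ 2 + of _ y ^ 2 + root _ * of _ y = 0 := by
  have := eval₂_root (X ^ 2 + C y * X + C (y ^ 2))
  simp only [eval₂_add, eval₂_pow, eval₂_mul, eval₂_C, eval₂_X, map_pow] at this
  linear_combination this

theorem _root_.AdjoinRoot.root_sq_mul_of_ne_zero {y : R} (h3 : y ^ 3 = 0) (h2 : y ^ 2 ≠ 0) :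
    root (X ^ 2 + C y * X + C (y ^ 2)) ^ 2 * of _ y ≠ 0 := by
  have : Nontrivial R := ⟨⟨_, _, h2⟩⟩
  set f : R[X] := X ^ 2 + C y * X + C (y ^ 2)
  have hf : f.Monic := by simp only [f]; monicity!
  have hdeg : f.natDegree = 2 := by simp only [f]; compute_degree!
  have hred : root f ^ 2 * of f y = -mk f (C (y ^ 2) * X) := by
    rw [eq_neg_iff_add_eq_zero, ← mk_X, ← mk_C, ← map_pow, ← map_mul, ← map_add,
      mk_eq_zero]
    have hC : C y ^ 3 = 0 := by rw [← C_pow, h3, C_0]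
    exact ⟨C y, by simp only [f, C_pow]; linear_combination (-1 : R[X]) * hC⟩
  rw [hred, neg_ne_zero]
  refine mk_ne_zero_of_natDegree_lt hf ?_ ?_
  · rwa [C_mul_X_eq_monomial, Ne, monomial_eq_zero_iff]
  · rw [hdeg, natDegree_C_mul_X _ h2]; norm_num

end Polynomial

namespace LamQ8
variable {k : Type} [Field k]

theorem qx_sq_add_qy_sq_add_qx_mul_qy : qx k ^ 2 + qy k ^ 2 + qx k * qy k = 0 := by
  simp only [qx, qy, ← map_pow, ← map_mul, ← map_add]
  exact Ideal.Quotient.eq_zero_iff_mem.mpr (Ideal.subset_span (Set.mem_insert _ _))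

section Lift
variable {S : Type*} [CommRing S] [Algebra k S]

noncomputable def lift (a b : S) (hab : a ^ 2 + b ^ 2 + a * b = 0) (hb : b ^ 3 = 0) :
    LamQ8 k →+* S :=
  Ideal.Quotient.lift _ (LaurentPolynomial.eval₂ (aeval ![a, b]).toRingHom 1) <| by
    simp_rw [← RingHom.mem_ker, ← SetLike.le_def, Ideal.span_le, Set.insert_subset_iff,
      Set.singleton_subset_iff]
    simp [hab, hb]

variable (a b : S) (hab : a ^ 2 + b ^ 2 + a * b = 0) (hb : b ^ 3 = 0)

@[simp] theorem lift_qx : lift a b hab hb (qx k) = a := by simp [lift, qx]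

@[simp] theorem lift_qy : lift a b hab hb (qy k) = b := by simp [lift, qy]

end Lift

open AdjoinRoot Polynomial in
theorem qx_sq_mul_qy_ne_zero : qx k ^ 2 * qy k ≠ 0 := by
  set y := root (Polynomial.X ^ 3 : k[X])
  set f : (AdjoinRoot (Polynomial.X ^ 3 : k[X]))[X] :=
    Polynomial.X ^ 2 + Polynomial.C y * Polynomial.X + Polynomial.C (y ^ 2)
  have hy3 : y ^ 3 = 0 := root_X_pow_pow_self 3
  have hb : of f y ^ 3 = 0 := by rw [← map_pow, hy3, map_zero]
  intro h
  have := congrArg (lift (root f) (of f y) (root_sq_add_of_sq_add_root_mul_of y) hb) h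
  rw [map_mul, map_pow, lift_qx, lift_qy, map_zero] at this
  exact root_sq_mul_of_ne_zero hy3 (root_X_pow_pow_ne_zero (by norm_num)) this

end LamQ8

/-- with `A = [[y, x+y],[x, y]]`, `B = [[x², 0],[x², x²]]`,
`D = [[x, y],[x+y, x]]` over `Λ`, one has `AD = DA = 0` and there are no
`2×2` matrices `Q, R` over `Λ` with `B = AQ + RA`. -/
theorem stmt_16 (k : Type) [Field k] [CharP k 2]
    (A B D : Matrix (Fin 2) (Fin 2) (LamQ8 k))
    (hA : A = !![qy k, qx k + qy k; qx k, qy k])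
    (hB : B = !![qx k ^ 2, 0; qx k ^ 2, qx k ^ 2])
    (hD : D = !![qx k, qy k; qx k + qy k, qx k]) :
    A * D = 0 ∧ D * A = 0 ∧
      ¬ ∃ Q R : Matrix (Fin 2) (Fin 2) (LamQ8 k), B = A * Q + R * A := by
  have h2 : (2 : LamQ8 k) = 0 := by
    rw [← map_ofNat (algebraMap k (LamQ8 k)) 2, CharTwo.two_eq_zero (R := k), map_zero]
  have hrel := LamQ8.qx_sq_add_qy_sq_add_qx_mul_qy (k := k)
  -- Naming the ring `LamQ8 k` lets its instances be synthesized rather than unified, which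
  -- would unfold the quotient ring structure.
  have hAD : A * D = 0 := by rw [hA, hD]; exact Q8.matA_mul_matD (R := LamQ8 k) h2 hrel
  have hDA : D * A = 0 := by rw [hA, hD]; exact Q8.matD_mul_matA (R := LamQ8 k) h2 hrel
  have hBD : (B * D).trace ≠ 0 := by
    rw [hB, hD]
    exact (Q8.trace_matB_mul_matD (R := LamQ8 k) h2).trans_ne LamQ8.qx_sq_mul_qy_ne_zero
  exact ⟨hAD, hDA,
    Matrix.not_exists_eq_mul_add_mul_of_trace_mul_ne_zero (α := LamQ8 k) hAD hDA hBD⟩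
end
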